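/- arXiv:2109.08316 — 2 statements merged into one kernel-verified Lean document; each statement's English description precedes it below -/
import Mathlib

section
/- Let G be a parity game that is k-transducer live. Then G is winning for Player 2 against k-transducer environments: there exists a Player-2 strategy σ such that every infinite word that agrees with σ and agrees with some k-transducer for Player 1 generates a play that is winning for Player 2. -/
/-- A two-player game arena: Player 1 plays actions from `A` at `V1`-vertices,
Player 2 plays actions from `B` at `V2`-vertices. `F1`/`F2` are the colorings. -/
structure Game (V1 V2 A B : Type) where
  E1 : V1 → A → V2
  E2 : V2 → B → V1
  init : V1
  F1 : V1 → ℕ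
  F2 : V2 → ℕ

/-- A finite-state transducer with output alphabet `A`, input alphabet `B`
and state set `M`. -/
structure Transducer (A B M : Type) where
  start : M
  step : M → B → M
  out : M → A

/-- The transition function extended to input words, starting from state `m`. -/
def Transducer.stepFrom {A B M : Type} (T : Transducer A B M) (m : M) (x : List B) : M :=
  x.foldl T.step m

/-- `L̂ : B* → A`, the output of the transducer after reading an input word. -/
def Transducer.outWord {A B M : Type} (T : Transducer A B M) (x : List B) : A :=
  T.out (T.stepFrom T.start x)

/-- The history (element of `(A×B)*`) consisting of the first `n` rounds of an
infinite word given by `a` and `b`. -/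
def hist {A B : Type} (a : ℕ → A) (b : ℕ → B) (n : ℕ) : List (A × B) :=
  (List.range n).map (fun i => (a i, b i))

/-- The infinite word `a₀b₀a₁b₁…` agrees with the Player-2 strategy `σ`. -/
def AgreesP2 {A B : Type} (σ : List (A × B) → A → B) (a : ℕ → A) (b : ℕ → B) : Prop :=
  ∀ n, b n = σ (hist a b n) (a n)

/-- The infinite word `a₀b₀a₁b₁…` agrees with the Player-1 strategy `τ`. -/
def AgreesP1 {A B : Type} (τ : List (A × B) → A) (a : ℕ → A) (b : ℕ → B) : Prop :=
  ∀ n, a n = τ (hist a b n)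

/-- The Player-1 strategy `f_T` induced by a transducer `T`. -/
def Transducer.strat {A B M : Type} (T : Transducer A B M) : List (A × B) → A :=
  fun h => T.outWord (h.map Prod.snd)

/-- An infinite word agrees with the transducer `T` (for Player 1). -/
def InfAgrees {A B M : Type} (T : Transducer A B M) (a : ℕ → A) (b : ℕ → B) : Prop :=
  AgreesP1 T.strat a b

/-- A finite word in `(A×B)*` agrees with the transducer `T` (for Player 1). -/
def FinAgrees {A B M : Type} (T : Transducer A B M) (w : List (A × B)) : Prop :=
  ∀ i : Fin w.length, (w.get i).1 = T.outWord ((w.take i.val).map Prod.snd)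

/-- The infinite word given by `a`, `b` extends the finite word `w`. -/
def ExtendsWord {A B : Type} (w : List (A × B)) (a : ℕ → A) (b : ℕ → B) : Prop :=
  ∀ i : Fin w.length, a i.val = (w.get i).1 ∧ b i.val = (w.get i).2

/-- The Player-1 vertices `u₀ u₁ u₂ …` of the play generated by the word
`a₀b₀a₁b₁…` from the Player-1 vertex `u0`. -/
def Game.playU {V1 V2 A B : Type} (G : Game V1 V2 A B) (u0 : V1) (a : ℕ → A) (b : ℕ → B) :
    ℕ → V1
  | 0 => u0
  | n + 1 => G.E2 (G.E1 (G.playU u0 a b n) (a n)) (b n)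

/-- The sequence of colors `F(u₀) F(v₀) F(u₁) F(v₁) …` along the play generated
by the word `a₀b₀a₁b₁…` from `u0`. -/
def Game.colorSeq {V1 V2 A B : Type} (G : Game V1 V2 A B) (u0 : V1) (a : ℕ → A) (b : ℕ → B)
    (n : ℕ) : ℕ :=
  if n % 2 = 0 then G.F1 (G.playU u0 a b (n / 2))
  else G.F2 (G.E1 (G.playU u0 a b (n / 2)) (a (n / 2)))

/-- Reachability winning condition for Player 2: some vertex of color 2 occurs. -/
def Game.reachWin {V1 V2 A B : Type} (G : Game V1 V2 A B) (u0 : V1) (a : ℕ → A) (b : ℕ → B) :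
    Prop :=
  ∃ n, G.colorSeq u0 a b n = 2

/-- Parity winning condition for Player 2: the largest color occurring infinitely
often along the play is even. -/
def Game.parityWin {V1 V2 A B : Type} (G : Game V1 V2 A B) (u0 : V1) (a : ℕ → A) (b : ℕ → B) :
    Prop :=
  ∃ c, Even c ∧ {n | G.colorSeq u0 a b n = c}.Infinite ∧
    ∀ d, {n | G.colorSeq u0 a b n = d}.Infinite → d ≤ c

/-- `G` is `k`-transducer live (for the parity winning condition): every finite word
agreeing with some `k`-transducer for Player 1 can be extended to an infinite word that
agrees with some `k`-transducer for Player 1 and whose play is winning for Player 2. -/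
def Game.kLiveParity {V1 V2 A B : Type} (G : Game V1 V2 A B) (k : ℕ) : Prop :=
  ∀ w : List (A × B), (∃ T : Transducer A B (Fin k), FinAgrees T w) →
    ∃ a b, ExtendsWord w a b ∧ (∃ T : Transducer A B (Fin k), InfAgrees T a b) ∧
      G.parityWin G.init a b

/-- `G` is `k`-transducer live (for the reachability winning condition). -/
def Game.kLiveReach {V1 V2 A B : Type} (G : Game V1 V2 A B) (k : ℕ) : Prop :=
  ∀ w : List (A × B), (∃ T : Transducer A B (Fin k), FinAgrees T w) →
    ∃ a b, ExtendsWord w a b ∧ (∃ T : Transducer A B (Fin k), InfAgrees T a b) ∧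
      G.reachWin G.init a b

/-- The history of the unique word that agrees with the Player-1 strategy `τ` and
the Player-2 strategy `σ`. -/
def inducedHist {A B : Type} (τ : List (A × B) → A) (σ : List (A × B) → A → B) :
    ℕ → List (A × B)
  | 0 => []
  | n + 1 =>
      let h := inducedHist τ σ n
      h ++ [(τ h, σ h (τ h))]

/-- The Player-1 actions of the unique word agreeing with `τ` and `σ`. -/
def inducedA {A B : Type} (τ : List (A × B) → A) (σ : List (A × B) → A → B) (n : ℕ) : A :=
  τ (inducedHist τ σ n)

/-- The Player-2 actions of the unique word agreeing with `τ` and `σ`. -/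
def inducedB {A B : Type} (τ : List (A × B) → A) (σ : List (A × B) → A → B) (n : ℕ) : B :=
  σ (inducedHist τ σ n) (inducedA τ σ n)

/-! Player 2 fixes, for every finite word consistent with some `k`-transducer, a winning
continuation that is itself consistent with some `k`-transducer (liveness), and follows the
continuation chosen at the last point where Player 1 deviated from the current one. If Player 1
deviates at time `n`, the transducer behind the continuation chosen before `n` agrees with the
play exactly up to `n`, so distinct deviation times belong to distinct transducers. There are
finitely many `k`-transducers, hence finitely many deviations, and from the last one on the play
is a winning continuation. -/

section Strategies

variable {A B ι : Type}

instance Transducer.finite {M : Type} [Finite A] [Finite B] [Finite M] :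
    Finite (Transducer A B M) :=
  Finite.of_injective (fun T => (T.start, T.step, T.out)) fun
    | ⟨_, _, _⟩, ⟨_, _, _⟩, h => by cases h; rfl

def FinAgreesP1 (τ : List (A × B) → A) (w : List (A × B)) : Prop :=
  ∀ i : Fin w.length, (w.get i).1 = τ (w.take i)

def LiveAgainst (τ : ι → List (A × B) → A) (W : (ℕ → A) → (ℕ → B) → Prop) : Prop :=
  ∀ w : List (A × B), (∃ j, FinAgreesP1 (τ j) w) →
    ∃ a b, ExtendsWord w a b ∧ (∃ j, AgreesP1 (τ j) a b) ∧ W a b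

@[simp] lemma length_hist (a : ℕ → A) (b : ℕ → B) (n : ℕ) : (hist a b n).length = n := by
  simp [hist]

lemma hist_succ (a : ℕ → A) (b : ℕ → B) (n : ℕ) :
    hist a b (n + 1) = hist a b n ++ [(a n, b n)] := by
  simp [hist, List.range_succ]

lemma hist_congr {a a' : ℕ → A} {b b' : ℕ → B} {n : ℕ}
    (h : ∀ i < n, a i = a' i ∧ b i = b' i) : hist a b n = hist a' b' n :=
  List.map_congr_left fun i hi => by
    rw [List.mem_range] at hi
    rw [(h i hi).1, (h i hi).2]

lemma finAgreesP1_hist_iff (τ : List (A × B) → A) (a : ℕ → A) (b : ℕ → B) (n : ℕ) :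
    FinAgreesP1 τ (hist a b n) ↔ ∀ i < n, a i = τ (hist a b i) := by
  have take_hist : ∀ i ≤ n, (hist a b n).take i = hist a b i := fun i hi => by
    simp [hist, ← List.map_take, List.take_range, Nat.min_eq_left hi]
  constructor
  · intro h i hi
    have := h ⟨i, by simpa using hi⟩
    rw [take_hist i hi.le] at this
    simpa [hist] using this
  · rintro h ⟨i, hi⟩
    have hi : i < n := by simpa using hi
    rw [take_hist i hi.le]
    simpa [hist] using h i hi

lemma AgreesP1.finAgreesP1_hist {τ : List (A × B) → A} {a : ℕ → A} {b : ℕ → B}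
    (h : AgreesP1 τ a b) (n : ℕ) : FinAgreesP1 τ (hist a b n) :=
  (finAgreesP1_hist_iff τ a b n).2 fun i _ => h i

lemma Set.Finite.of_firstFailure [Finite ι] {P : ι → ℕ → Prop} {S : Set ℕ} (j : ℕ → ι)
    (hj : ∀ n ∈ S, (∀ i < n, P (j n) i) ∧ ¬ P (j n) n) : S.Finite := by
  refine Set.Finite.of_finite_image (f := j) (Set.toFinite _) fun n hn n' hn' hjn => ?_
  by_contra hne
  rcases Nat.lt_or_gt_of_ne hne with hlt | hlt
  · exact (hj n hn).2 (hjn ▸ (hj n' hn').1 n hlt)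
  · exact (hj n' hn').2 (hjn ▸ (hj n hn).1 n' hlt)

end Strategies

section FollowPlan

variable {A B : Type} (pa : List (A × B) → ℕ → A) (pb : List (A × B) → ℕ → B)

/-- `(pa w, pb w)` is the continuation (plan) chosen at the finite word `w`, and `anchor pa h`
is the prefix of `h` whose plan is being followed; it is reset to `h` itself whenever Player 1
deviates from that plan. -/
def anchor [DecidableEq A] (h : List (A × B)) : List (A × B) :=
  h.reverseRecOn [] fun p x c => if x.1 = pa c p.length then c else p ++ [x]

variable [DecidableEq A]

lemma anchor_nil : anchor pa ([] : List (A × B)) = [] := by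
  rw [anchor, List.reverseRecOn_nil]

lemma anchor_append (h : List (A × B)) (x : A × B) :
    anchor pa (h ++ [x]) = if x.1 = pa (anchor pa h) h.length then anchor pa h else h ++ [x] := by
  rw [anchor, List.reverseRecOn_concat, anchor]

def followPlan : List (A × B) → A → B :=
  fun h _ => pb (anchor pa h) h.length

variable {pa pb} (a : ℕ → A) (b : ℕ → B)

lemma anchor_hist_succ (n : ℕ) :
    anchor pa (hist a b (n + 1)) =
      if a n = pa (anchor pa (hist a b n)) n then anchor pa (hist a b n) else hist a b (n + 1) := by
  rw [hist_succ, anchor_append, length_hist]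

lemma exists_anchor_hist_eq (n : ℕ) : ∃ m ≤ n, anchor pa (hist a b n) = hist a b m := by
  induction n with
  | zero => exact ⟨0, le_rfl, anchor_nil pa⟩
  | succ n ih =>
    obtain ⟨m, hm, hanchor⟩ := ih
    rw [anchor_hist_succ]
    split_ifs
    · exact ⟨m, by omega, hanchor⟩
    · exact ⟨n + 1, le_rfl, rfl⟩

variable {a b}

lemma agrees_plan_of_length_anchor_le (hσ : AgreesP2 (followPlan pa pb) a b) {n i : ℕ}
    (hlen : (anchor pa (hist a b n)).length ≤ i) (hi : i < n) :
    a i = pa (anchor pa (hist a b n)) i ∧ b i = pb (anchor pa (hist a b n)) i := by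
  induction n with
  | zero => omega
  | succ n ih =>
    rw [anchor_hist_succ] at hlen ⊢
    split_ifs at hlen ⊢ with hdev
    · rcases Nat.lt_or_ge i n with hin | hin
      · exact ih hlen hin
      · obtain rfl : i = n := by omega
        refine ⟨hdev, ?_⟩
        simpa [followPlan, hist] using hσ i
    · rw [length_hist] at hlen
      omega

lemma agrees_plan_of_lt (hσ : AgreesP2 (followPlan pa pb) a b)
    (hext : ∀ m, ExtendsWord (hist a b m) (pa (hist a b m)) (pb (hist a b m))) {n i : ℕ}
    (hi : i < n) : a i = pa (anchor pa (hist a b n)) i ∧ b i = pb (anchor pa (hist a b n)) i := by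
  rcases Nat.lt_or_ge i (anchor pa (hist a b n)).length with hlen | hlen
  · obtain ⟨m, -, hanchor⟩ := exists_anchor_hist_eq a b n
    rw [hanchor] at hlen ⊢
    have := hext m ⟨i, hlen⟩
    simp only [List.get_eq_getElem, hist, List.getElem_map, List.getElem_range] at this
    exact ⟨this.1.symm, this.2.symm⟩
  · exact agrees_plan_of_length_anchor_le hσ hlen hi

lemma eq_plan_of_finite_deviations (hσ : AgreesP2 (followPlan pa pb) a b)
    (hext : ∀ m, ExtendsWord (hist a b m) (pa (hist a b m)) (pb (hist a b m)))
    (hfin : {n | a n ≠ pa (anchor pa (hist a b n)) n}.Finite) :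
    ∃ m, a = pa (hist a b m) ∧ b = pb (hist a b m) := by
  obtain ⟨N, hN⟩ := hfin.bddAbove
  have hstable : ∀ n > N, anchor pa (hist a b n) = anchor pa (hist a b (N + 1)) := by
    intro n hn
    induction n with
    | zero => omega
    | succ n ih =>
      rcases Nat.lt_or_ge N n with hNn | hNn
      · have hfollow : a n = pa (anchor pa (hist a b n)) n := by
          by_contra hdev
          exact absurd (hN hdev) (by omega)
        rw [anchor_hist_succ, if_pos hfollow, ih hNn]
      · obtain rfl : n = N := by omega
        rfl
  obtain ⟨m, -, hanchor⟩ := exists_anchor_hist_eq a b (N + 1)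
  have hagree : ∀ i, a i = pa (hist a b m) i ∧ b i = pb (hist a b m) i := fun i => by
    have := agrees_plan_of_lt hσ hext (lt_max_of_lt_left (Nat.lt_succ_self i) :
      i < max (i + 1) (N + 1))
    rwa [hstable _ (by omega), hanchor] at this
  exact ⟨m, funext fun i => (hagree i).1, funext fun i => (hagree i).2⟩

end FollowPlan

section Winning

variable {A B ι : Type} {τ : ι → List (A × B) → A} {W : (ℕ → A) → (ℕ → B) → Prop}
  {pa : List (A × B) → ℕ → A} {pb : List (A × B) → ℕ → B}

/-- Each deviation at time `n` is the first disagreement of the play with the strategy behind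
the plan followed before `n`. -/
lemma finite_deviations [Finite ι] [DecidableEq A]
    (hplan : ∀ w, (∃ j, FinAgreesP1 (τ j) w) → ExtendsWord w (pa w) (pb w) ∧
      ∃ j, AgreesP1 (τ j) (pa w) (pb w))
    {a : ℕ → A} {b : ℕ → B} (hσ : AgreesP2 (followPlan pa pb) a b) {j₀ : ι}
    (hτ : AgreesP1 (τ j₀) a b) :
    {n | a n ≠ pa (anchor pa (hist a b n)) n}.Finite := by
  have hcons : ∀ n, ∃ j, FinAgreesP1 (τ j) (anchor pa (hist a b n)) := fun n => by
    obtain ⟨m, -, hanchor⟩ := exists_anchor_hist_eq (pa := pa) a b n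
    exact ⟨j₀, hanchor ▸ hτ.finAgreesP1_hist m⟩
  have hext : ∀ m, ExtendsWord (hist a b m) (pa (hist a b m)) (pb (hist a b m)) :=
    fun m => (hplan _ ⟨j₀, hτ.finAgreesP1_hist m⟩).1
  choose j hj using fun n => (hplan _ (hcons n)).2
  have hhist : ∀ {n i}, i ≤ n →
      hist a b i = hist (pa (anchor pa (hist a b n))) (pb (anchor pa (hist a b n))) i :=
    fun hin => hist_congr fun l hl => agrees_plan_of_lt hσ hext (by omega)
  refine Set.Finite.of_firstFailure (P := fun j i => a i = τ j (hist a b i)) j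
    fun n hdev => ⟨fun i hi => ?_, fun hagree => hdev ?_⟩
  · rw [(agrees_plan_of_lt hσ hext hi).1, hhist hi.le]
    exact hj n i
  · exact hagree.trans ((congrArg (τ (j n)) (hhist le_rfl)).trans (hj n n).symm)

theorem exists_strategy_winning_of_live [Finite ι] [Nonempty B] (hlive : LiveAgainst τ W) :
    ∃ σ : List (A × B) → A → B,
      ∀ a b, AgreesP2 σ a b → (∃ j, AgreesP1 (τ j) a b) → W a b := by
  classical
  rcases isEmpty_or_nonempty ι with hι | ⟨⟨j₀⟩⟩
  · exact ⟨fun _ _ => Classical.arbitrary B, fun _ _ _ ⟨j, _⟩ => isEmptyElim j⟩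
  have : Nonempty A := ⟨τ j₀ []⟩
  have hplan : ∀ w, ∃ p : (ℕ → A) × (ℕ → B), (∃ j, FinAgreesP1 (τ j) w) →
      ExtendsWord w p.1 p.2 ∧ (∃ j, AgreesP1 (τ j) p.1 p.2) ∧ W p.1 p.2 := fun w => by
    by_cases hw : ∃ j, FinAgreesP1 (τ j) w
    · obtain ⟨a, b, hab⟩ := hlive w hw
      exact ⟨(a, b), fun _ => hab⟩
    · exact ⟨Classical.arbitrary _, fun h => absurd h hw⟩
  choose p hp using hplan
  refine ⟨followPlan (fun w => (p w).1) (fun w => (p w).2), fun a b hσ ⟨j, hτ⟩ => ?_⟩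
  have hcons : ∀ m, ∃ j, FinAgreesP1 (τ j) (hist a b m) := fun m => ⟨j, hτ.finAgreesP1_hist m⟩
  obtain ⟨m, ha, hb⟩ := eq_plan_of_finite_deviations hσ (fun m => (hp _ (hcons m)).1)
    (finite_deviations (fun w hw => ⟨(hp w hw).1, (hp w hw).2.1⟩) hσ hτ)
  have hwin := (hp _ (hcons m)).2.2
  rwa [← ha, ← hb] at hwin

end Winning

theorem live_game_winning_for_p2_general
    {V1 V2 A B : Type} [Fintype A] [Fintype B]
    [Nonempty B]
    (G : Game V1 V2 A B) (k : ℕ) (hlive : G.kLiveParity k) :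
    ∃ σ : List (A × B) → A → B,
      ∀ (a : ℕ → A) (b : ℕ → B), AgreesP2 σ a b →
        (∃ T : Transducer A B (Fin k), InfAgrees T a b) →
        G.parityWin G.init a b :=
  exists_strategy_winning_of_live (τ := Transducer.strat) hlive

/-- **Theorem 3, first part.** A `k`-transducer live parity game `G`
is winning for Player 2 against `k`-transducer environments: there is a Player-2
strategy `σ` such that every infinite word that agrees with `σ` and agrees with some
`k`-transducer for Player 1 generates a play that is winning for Player 2. -/
theorem live_game_winning_for_p2
    {V1 V2 A B : Type} [Fintype V1] [Fintype V2] [Fintype A] [Fintype B]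
    [Nonempty A] [Nonempty B]
    (G : Game V1 V2 A B) (k : ℕ) (hlive : G.kLiveParity k) :
    ∃ σ : List (A × B) → A → B,
      ∀ (a : ℕ → A) (b : ℕ → B), AgreesP2 σ a b →
        (∃ T : Transducer A B (Fin k), InfAgrees T a b) →
        G.parityWin G.init a b :=
  live_game_winning_for_p2_general G k hlive
end

section
/- Let ψ = C₁ ∧ … ∧ C_r be a Boolean formula in conjunctive normal form over the variables x₁,…,x_k. If ψ is satisfiable, then there exists a k-transducer T for Player 1 in the reachability game G_ψ such that every infinite word agreeing with T generates a play that never visits a vertex of color 2 (hence is winning for Player 1); consequently G_ψ is not k-transducer live. -/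
/-- Player-1 actions in the CNF game: `(i, b)` assigns value `b` to `xᵢ`
(`⊤ᵢ` / `⊥ᵢ`). -/
abbrev CAct1 (k : ℕ) := Fin k × Bool

/-- Player-2 actions: the single dummy action `ε`. -/
abbrev CAct2 : Type := Unit

/-- A clause over `x₁,…,x_k`: `c i b = true` iff the literal asserting that `xᵢ`
has value `b` occurs in the clause. -/
def CClause (k : ℕ) := Fin k → Bool → Bool

/-- The clause `c` is satisfied by the assignment `v`. -/
def CClause.Sat {k : ℕ} (c : CClause k) (v : Fin k → Bool) : Prop :=
  ∃ i, c i (v i) = true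

/-- Satisfiability of the CNF formula `C₁ ∧ … ∧ C_r`. -/
def CNFSat {k r : ℕ} (C : Fin r → CClause k) : Prop :=
  ∃ v : Fin k → Bool, ∀ j : Fin r, (C j).Sat v

/-- Player-1 vertices: Player 1 is about to assign `xᵢ` in stage `j`, the status
flag `β` recording whether `C_j` is already satisfied; plus a Player-1 vertex of each
paradise (`para true` belongs to the Player-2 paradise, `para false` to the
Player-1 paradise). -/
inductive CV1 (k r : ℕ) where
  | node (j : Fin r) (i : Fin k) (β : Bool)
  | para (p : Bool)

/-- Player-2 vertices: the dummy-move vertices after `xᵢ` was assigned in stage `j`,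
plus a Player-2 vertex of each paradise. -/
inductive CV2 (k r : ℕ) where
  | node (j : Fin r) (i : Fin k) (β : Bool)
  | para (p : Bool)

/-- Transitions from Player-1 vertices: the legal action assigning `xᵢ` updates the
status flag; any other action leads to the Player-2 paradise. -/
def cnfE1 {k r : ℕ} (C : Fin r → CClause k) : CV1 k r → CAct1 k → CV2 k r
  | .node j i β, (i', bv) => if i' = i then .node j i (β || C j i bv) else .para true
  | .para p, _ => .para p

/-- Transitions from Player-2 vertices (via the dummy move): proceed to the next
variable; at the end of stage `j`, status `⊥` leads to the Player-2 paradise,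
status `⊤` leads to stage `j+1`, or to the Player-1 paradise after the last stage. -/
def cnfE2 {k r : ℕ} (C : Fin r → CClause k) : CV2 k r → CAct2 → CV1 k r
  | .node j i β, _ =>
      if h : (i : ℕ) + 1 < k then .node j ⟨(i : ℕ) + 1, h⟩ β
      else if β = true then
        if hj : (j : ℕ) + 1 < r then .node ⟨(j : ℕ) + 1, hj⟩ ⟨0, i.pos⟩ false
        else .para false
      else .para true
  | .para p, _ => .para p

/-- Coloring: the Player-2 paradise has color 2, all other vertices color 1. -/
def cnfF1 {k r : ℕ} : CV1 k r → ℕ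
  | .para true => 2
  | _ => 1

def cnfF2 {k r : ℕ} : CV2 k r → ℕ
  | .para true => 2
  | _ => 1

/-- The reachability game `G_ψ` for the CNF formula with clauses `C`. -/
def cnfGame {k r : ℕ} (hk : 0 < k) (hr : 0 < r) (C : Fin r → CClause k) :
    Game (CV1 k r) (CV2 k r) (CAct1 k) CAct2 where
  E1 := cnfE1 C
  E2 := cnfE2 C
  init := .node ⟨0, hr⟩ ⟨0, hk⟩ false
  F1 := cnfF1
  F2 := cnfF2

section Aux

variable {k r : ℕ}

/-- Status flag after assigning the first `m` variables of clause `j`. -/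
def statAux (C : Fin r → CClause k) (v : Fin k → Bool) (j : Fin r) : ℕ → Bool
  | 0 => false
  | m + 1 => if h : m < k then statAux C v j m || C j ⟨m, h⟩ (v ⟨m, h⟩) else statAux C v j m

lemma statAux_true (C : Fin r → CClause k) (v : Fin k → Bool) (j : Fin r)
    (i : Fin k) (hC : C j i (v i) = true) :
    ∀ m, (i : ℕ) < m → statAux C v j m = true := by
  intro m
  induction m with
  | zero => omega
  | succ m ih =>
    intro him
    rcases Nat.lt_or_ge (i : ℕ) m with h | h
    · simp only [statAux]
      split <;> simp [ih h]
    · have hi : (i : ℕ) = m := by omega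
      have hm : m < k := hi ▸ i.isLt
      have hmi : (⟨m, hm⟩ : Fin k) = i := Fin.ext (by simp [hi])
      simp only [statAux, dif_pos hm, hmi, hC, Bool.or_true]

lemma div_lt_r (hk : 0 < k) {n : ℕ} (h : n < k * r) : n / k < r := by
  rw [Nat.div_lt_iff_lt_mul hk, Nat.mul_comm]; exact h

/-- The intended Player-1 vertex at time `n` when Player 1 plays according to the
satisfying assignment `v`. -/
def targetV (hk : 0 < k) (C : Fin r → CClause k) (v : Fin k → Bool) (n : ℕ) : CV1 k r :=
  if h : n < k * r then
    .node ⟨n / k, div_lt_r hk h⟩ ⟨n % k, Nat.mod_lt _ hk⟩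
      (statAux C v ⟨n / k, div_lt_r hk h⟩ (n % k))
  else .para false

lemma cnfE1_node (C : Fin r → CClause k) (j : Fin r) (i : Fin k) (β : Bool) (bv : Bool) :
    cnfE1 C (.node j i β) (i, bv) = .node j i (β || C j i bv) := by
  simp [cnfE1]

lemma cnfE2_node (C : Fin r → CClause k) (j : Fin r) (i : Fin k) (β : Bool) (u : CAct2) :
    cnfE2 C (.node j i β) u =
      if h : (i : ℕ) + 1 < k then .node j ⟨(i : ℕ) + 1, h⟩ β
      else if β = true then
        if hj : (j : ℕ) + 1 < r then .node ⟨(j : ℕ) + 1, hj⟩ ⟨0, i.pos⟩ false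
        else .para false
      else .para true := rfl

lemma play_eq (hk : 0 < k) (hr : 0 < r) (C : Fin r → CClause k) (v : Fin k → Bool)
    (hv : ∀ j : Fin r, (C j).Sat v)
    (a : ℕ → CAct1 k) (b : ℕ → CAct2)
    (ha : ∀ n, n < k * r →
      a n = (⟨n % k, Nat.mod_lt _ hk⟩, v ⟨n % k, Nat.mod_lt _ hk⟩)) :
    ∀ n, (cnfGame hk hr C).playU (cnfGame hk hr C).init a b n = targetV hk C v n := by
  intro n
  induction n with
  | zero =>
    have hpos : 0 < k * r := Nat.mul_pos hk hr
    simp only [Game.playU, cnfGame, targetV, dif_pos hpos]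
    simp [statAux, Nat.zero_div, Nat.zero_mod]
  | succ n ih =>
    rw [Game.playU, ih]
    by_cases h : n < k * r
    · have hmodlt : n % k < k := Nat.mod_lt _ hk
      have hdm := Nat.div_add_mod n k
      have hj : n / k < r := div_lt_r hk h
      rw [ha n h]
      simp only [targetV, dif_pos h, cnfGame]
      rw [cnfE1_node, cnfE2_node]
      by_cases h2 : n % k + 1 < k
      · have e : n + 1 = (n % k + 1) + k * (n / k) := by omega
        have hmod : (n + 1) % k = n % k + 1 := by
          rw [e, Nat.add_mul_mod_self_left, Nat.mod_eq_of_lt h2]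
        have hdiv : (n + 1) / k = n / k := by
          rw [e, Nat.add_mul_div_left _ _ hk, Nat.div_eq_of_lt h2, Nat.zero_add]
        have h1 : n + 1 < k * r := by
          have h3 : n + 1 < k * (n / k + 1) := by rw [Nat.mul_succ]; omega
          exact lt_of_lt_of_le h3 (Nat.mul_le_mul_left k (by omega))
        rw [dif_pos (show ((⟨n % k, hmodlt⟩ : Fin k) : ℕ) + 1 < k from h2)]
        simp only [targetV, dif_pos h1, CV1.node.injEq]
        refine ⟨Fin.ext (by simp [hdiv]), Fin.ext (by simp [hmod]), ?_⟩
        simp only [hdiv, hmod, statAux, dif_pos hmodlt]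
      · have hke : n % k + 1 = k := by omega
        have e : n + 1 = k * (n / k + 1) := by rw [Nat.mul_succ]; omega
        have hstat : (statAux C v ⟨n / k, hj⟩ (n % k)
            || C ⟨n / k, hj⟩ ⟨n % k, hmodlt⟩ (v ⟨n % k, hmodlt⟩)) = true := by
          have := statAux_true C v ⟨n / k, hj⟩ _ (hv ⟨n / k, hj⟩).choose_spec
            (n % k + 1) (by have := (hv ⟨n / k, hj⟩).choose.isLt; omega)
          simpa [statAux, dif_pos hmodlt] using this
        rw [dif_neg (show ¬ (((⟨n % k, hmodlt⟩ : Fin k) : ℕ) + 1 < k) from h2), hstat,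
          if_pos rfl]
        by_cases hjr : n / k + 1 < r
        · have h1 : n + 1 < k * r := by
            rw [e]; exact mul_lt_mul_of_pos_left hjr hk
          have hdiv : (n + 1) / k = n / k + 1 := by rw [e, Nat.mul_div_cancel_left _ hk]
          have hmod : (n + 1) % k = 0 := by rw [e, Nat.mul_mod_right]
          rw [dif_pos (show ((⟨n / k, hj⟩ : Fin r) : ℕ) + 1 < r from hjr)]
          simp only [targetV, dif_pos h1]
          congr 1
          · exact Fin.ext (by simp [hdiv])
          · exact Fin.ext (by simp [hmod])
          · rw [hmod]
            rfl
        · have h1 : ¬ (n + 1 < k * r) := by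
            rw [e]
            exact not_lt.mpr (Nat.mul_le_mul_left k (by omega))
          rw [dif_neg (show ¬ (((⟨n / k, hj⟩ : Fin r) : ℕ) + 1 < r) from hjr)]
          simp only [targetV, dif_neg h1]
    · have h1 : ¬ (n + 1 < k * r) := by omega
      simp only [targetV, dif_neg h, dif_neg h1, cnfGame, cnfE1, cnfE2]

lemma color_ne_two (hk : 0 < k) (hr : 0 < r) (C : Fin r → CClause k) (v : Fin k → Bool)
    (hv : ∀ j : Fin r, (C j).Sat v)
    (a : ℕ → CAct1 k) (b : ℕ → CAct2)
    (ha : ∀ n, n < k * r →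
      a n = (⟨n % k, Nat.mod_lt _ hk⟩, v ⟨n % k, Nat.mod_lt _ hk⟩)) :
    ∀ n, (cnfGame hk hr C).colorSeq (cnfGame hk hr C).init a b n ≠ 2 := by
  intro n
  have hplay := play_eq hk hr C v hv a b ha
  unfold Game.colorSeq
  rw [hplay]
  split
  · unfold targetV
    split <;> simp [cnfGame, cnfF1]
  · unfold targetV
    split
    · next h =>
      rw [ha _ h]
      simp only [cnfGame]
      rw [cnfE1_node]
      simp [cnfF2]
    · simp only [cnfGame]
      simp [cnfE1, cnfF2]

/-- The transducer cycling through states `0,…,k-1`, outputting the assignment `v`. -/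
def cycT (hk : 0 < k) (v : Fin k → Bool) : Transducer (CAct1 k) CAct2 (Fin k) where
  start := ⟨0, hk⟩
  step m _ := ⟨((m : ℕ) + 1) % k, Nat.mod_lt _ hk⟩
  out m := (m, v m)

lemma cycT_stepFrom (hk : 0 < k) (v : Fin k → Bool) (x : List CAct2) :
    ∀ m : Fin k, (cycT hk v).stepFrom m x = ⟨((m : ℕ) + x.length) % k, Nat.mod_lt _ hk⟩ := by
  induction x with
  | nil => intro m; simp [Transducer.stepFrom, Fin.ext_iff, Nat.mod_eq_of_lt m.isLt]
  | cons u x ih =>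
    intro m
    have h0 : (cycT hk v).stepFrom m (u :: x)
        = (cycT hk v).stepFrom ⟨((m : ℕ) + 1) % k, Nat.mod_lt _ hk⟩ x := rfl
    rw [h0, ih]
    simp only [Fin.ext_iff, List.length_cons]
    rw [Nat.mod_add_mod]
    congr 1
    omega

lemma cycT_outWord (hk : 0 < k) (v : Fin k → Bool) (x : List CAct2) :
    (cycT hk v).outWord x
      = (⟨x.length % k, Nat.mod_lt _ hk⟩, v ⟨x.length % k, Nat.mod_lt _ hk⟩) := by
  unfold Transducer.outWord
  rw [cycT_stepFrom]
  simp [cycT]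

end Aux


/-- If the CNF formula `ψ = C₁ ∧ … ∧ C_r` over `x₁,…,x_k` is
satisfiable, then there is a `k`-transducer `T` for Player 1 in the reachability game
`G_ψ` such that every infinite word agreeing with `T` generates a play that never
visits a vertex of color 2 (hence is winning for Player 1); consequently `G_ψ` is
not `k`-transducer live. -/
theorem cnf_sat_implies_not_live {k r : ℕ} (hk : 0 < k) (hr : 0 < r)
    (C : Fin r → CClause k) (hsat : CNFSat C) :
    (∃ T : Transducer (CAct1 k) CAct2 (Fin k),
        ∀ (a : ℕ → CAct1 k) (b : ℕ → CAct2), InfAgrees T a b →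
          ∀ n, (cnfGame hk hr C).colorSeq (cnfGame hk hr C).init a b n ≠ 2) ∧
      ¬ (cnfGame hk hr C).kLiveReach k := by
  obtain ⟨v, hv⟩ := hsat
  constructor
  · refine ⟨cycT hk v, fun a b hag n => ?_⟩
    apply color_ne_two hk hr C v hv a b
    intro m hm
    have := hag m
    rw [this]
    unfold Transducer.strat
    rw [cycT_outWord]
    simp [hist]
  · intro hlive
    set w : List (CAct1 k × CAct2) :=
      (List.range (k * r)).map
        (fun n => ((⟨n % k, Nat.mod_lt _ hk⟩, v ⟨n % k, Nat.mod_lt _ hk⟩), ())) with hw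
    have hlen : w.length = k * r := by simp [hw]
    have hfin : FinAgrees (cycT hk v) w := by
      intro i
      rw [cycT_outWord]
      have hil : (i : ℕ) < k * r := by omega
      have hget : w.get i = ((⟨(i : ℕ) % k, Nat.mod_lt _ hk⟩,
          v ⟨(i : ℕ) % k, Nat.mod_lt _ hk⟩), ()) := by
        simp [hw, List.get_eq_getElem]
      have htl : ((w.take (i : ℕ)).map Prod.snd).length = (i : ℕ) := by
        rw [List.length_map, List.length_take]
        have := i.isLt
        omega
      rw [hget, htl]
    obtain ⟨a, b, hext, -, hwin⟩ := hlive w ⟨cycT hk v, hfin⟩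
    have ha : ∀ n, n < k * r →
        a n = (⟨n % k, Nat.mod_lt _ hk⟩, v ⟨n % k, Nat.mod_lt _ hk⟩) := by
      intro n hn
      have hn' : n < w.length := by omega
      have := (hext ⟨n, hn'⟩).1
      rw [this]
      simp [hw, List.get_eq_getElem]
    obtain ⟨n, hn⟩ := hwin
    exact color_ne_two hk hr C v hv a b ha n hn
end
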